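/- Let n ≥ 3 be an integer. Then there exists a surjective group homomorphism from the free product ℤ/2 ∗ ℤ/n onto the dihedral group D_n of order 2n whose kernel is torsion-free. -/

import Mathlib

/-!
A reduced word in a free product whose first and last letters lie in different factors has
infinite order, since its powers are again reduced words. If instead the first and last letters
lie in the same factor, conjugating by the first letter shortens the word. By induction on the
length, every element of finite order is conjugate into a factor, so a homomorphism that is
injective on each factor has torsion-free kernel. Sending the generators of `ℤ/2` and `ℤ/n` to a
reflection and a rotation gives such a surjection onto `D_n`.
-/

open Monoid

/-- A monoid is torsion-free if no nontrivial element has finite order (old Mathlib definition). -/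
def Monoid.IsTorsionFree (G : Type*) [Monoid G] : Prop :=
  ∀ g : G, g ≠ 1 → ¬IsOfFinOrder g

universe u

theorem MonoidHom.isTorsionFree_ker {G H : Type*} [Group G] [Group H] {φ : G →* H}
    (h : ∀ x, IsOfFinOrder x → φ x = 1 → x = 1) : IsTorsionFree φ.ker := fun x hx hfin =>
  hx <| Subtype.ext <| h x (φ.ker.subtype.isOfFinOrder hfin) x.2

namespace Monoid.CoprodI

variable {ι : Type*} {G : ι → Type*} [∀ i, Group (G i)]

theorem Word.prod_injective : Function.Injective (Word.prod : Word G → CoprodI G) := by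
  classical exact Word.equiv.symm.injective

theorem NeWord.prod_ne_one {i j : ι} (w : NeWord G i j) : w.prod ≠ 1 := fun h =>
  w.toList_ne_nil <| congrArg Word.toList (Word.prod_injective (h.trans Word.prod_empty.symm))

theorem NeWord.not_isOfFinOrder_prod {i j : ι} (hij : i ≠ j) (w : NeWord G i j) :
    ¬IsOfFinOrder w.prod := by
  have hpow : ∀ m : ℕ, ∃ v : NeWord G i j, v.prod = w.prod ^ (m + 1) := by
    intro m
    induction m with
    | zero => exact ⟨w, (pow_one _).symm⟩
    | succ m ih =>
      obtain ⟨v, hv⟩ := ih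
      exact ⟨v.append hij.symm w, by rw [NeWord.append_prod, hv, ← pow_succ]⟩
  intro hfin
  obtain ⟨m, hm, hpow1⟩ := isOfFinOrder_iff_pow_eq_one.mp hfin
  obtain ⟨v, hv⟩ := hpow (m - 1)
  rw [Nat.sub_add_cancel hm] at hv
  exact v.prod_ne_one (hv.trans hpow1)

theorem Word.not_isOfFinOrder_prod_of_head_ne_last {w : Word G} {a b : Σ i, G i}
    (ha : w.toList.head? = some a) (hb : w.toList.getLast? = some b) (hab : a.1 ≠ b.1) :
    ¬IsOfFinOrder w.prod := by
  obtain ⟨i, j, w', rfl⟩ := NeWord.of_word w (by rintro rfl; simp [Word.empty] at ha)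
  rw [NeWord.toWord, NeWord.toList_head?, Option.some_inj] at ha
  rw [NeWord.toWord, NeWord.toList_getLast?, Option.some_inj] at hb
  subst ha hb
  exact w'.not_isOfFinOrder_prod hab

theorem Word.exists_length_le_prod_eq_prod_mul_of {w : Word G} {i : ι} {g : G i}
    (hw : w.toList.getLast? = some ⟨i, g⟩) (m : G i) :
    ∃ w' : Word G, w'.toList.length ≤ w.toList.length ∧ w'.prod = w.prod * of m := by
  obtain ⟨l, hl⟩ := List.getLast?_eq_some_iff.1 hw
  have hprod : w.prod = (l.map fun p => of p.2).prod * of g := by simp [Word.prod, hl]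
  have hne_one : ∀ p ∈ l, p.2 ≠ 1 := fun p hp => w.ne_one p (by simp [hl, hp])
  have hchain : (l.map Sigma.fst ++ [i]).IsChain (· ≠ ·) := by
    simpa [hl] using (List.isChain_map Sigma.fst).2 w.chain_ne
  by_cases hgm : g * m = 1
  · refine ⟨⟨l, hne_one, ?_⟩, by simp [hl], ?_⟩
    · exact (List.isChain_map Sigma.fst).1 hchain.left_of_append
    · rw [hprod, mul_assoc, ← map_mul, hgm, map_one, mul_one]; rfl
  · refine ⟨⟨l ++ [⟨i, g * m⟩], ?_, ?_⟩, by simp [hl], ?_⟩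
    · simpa [or_imp, forall_and, hgm] using hne_one
    · exact (List.isChain_map Sigma.fst).1 (by simpa using hchain)
    · simp [Word.prod, hl, mul_assoc]

theorem Word.prod_eq_one_or_isConj_of_isOfFinOrder (w : Word G) (hw : IsOfFinOrder w.prod) :
    w.prod = 1 ∨ ∃ (i : ι) (g : G i), IsConj (of g) w.prod := by
  induction hk : w.toList.length using Nat.strong_induction_on generalizing w with
  | _ k ih =>
  subst hk
  match hl : w.toList with
  | [] => exact Or.inl (by simp [Word.prod, hl])
  | [⟨i, g⟩] => exact Or.inr ⟨i, g, by simpa [Word.prod, hl] using IsConj.refl (of g)⟩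
  | ⟨i, g⟩ :: b :: t =>
    let tail : Word G := ⟨b :: t, fun p hp => w.ne_one p (by simp [hl, hp]),
      by simpa [hl] using w.chain_ne.tail⟩
    have hprod : w.prod = of g * tail.prod := by simp [Word.prod, tail, hl]
    obtain ⟨⟨j, h⟩, hlast⟩ := Option.ne_none_iff_exists'.1 (by simp : (b :: t).getLast? ≠ none)
    obtain rfl | hij := eq_or_ne i j
    -- conjugating by `of g` moves the first letter to the end, where it merges with the last one
    · obtain ⟨w', hlen, hw'⟩ := tail.exists_length_le_prod_eq_prod_mul_of hlast g
      have hconj : IsConj w'.prod w.prod := isConj_iff.2 ⟨of g, by rw [hw', hprod]; group⟩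
      rcases ih _ (by simp [hl] at hlen ⊢; omega) w' (hconj.symm.isOfFinOrder hw) rfl with
        h1 | ⟨i', g', hg'⟩
      · exact Or.inl (isConj_one_left.1 (h1 ▸ hconj).symm)
      · exact Or.inr ⟨i', g', hg'.trans hconj⟩
    · exact absurd hw (Word.not_isOfFinOrder_prod_of_head_ne_last (a := ⟨i, g⟩) (by simp [hl])
        (by simpa [hl, List.getLast?_cons_cons] using hlast) hij)

theorem eq_one_or_isConj_of_isOfFinOrder {x : CoprodI G} (hx : IsOfFinOrder x) :
    x = 1 ∨ ∃ (i : ι) (g : G i), IsConj (of g) x := by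
  classical
  have hprod : (Word.equiv x).prod = x := Word.equiv.symm_apply_apply x
  rw [← hprod] at hx ⊢
  exact (Word.equiv x).prod_eq_one_or_isConj_of_isOfFinOrder hx

theorem eq_one_of_isOfFinOrder_of_map_eq_one {H : Type*} [Group H] {ψ : CoprodI G →* H}
    (hψ : ∀ i, Function.Injective (ψ.comp (of (i := i)))) {x : CoprodI G}
    (hx : IsOfFinOrder x) (hψx : ψ x = 1) : x = 1 := by
  obtain h1 | ⟨i, g, hg⟩ := eq_one_or_isConj_of_isOfFinOrder hx
  · exact h1
  have hψg : ψ (of g) = 1 := isConj_one_left.1 (hψx ▸ ψ.map_isConj hg)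
  have hg1 : g = 1 := hψ i (by simpa using hψg)
  exact isConj_one_right.1 (by simpa [hg1] using hg)

end Monoid.CoprodI

namespace Monoid.Coprod

variable {M N : Type u} [Group M] [Group N]

instance instGroupCond : ∀ b : Bool, Group (cond b N M)
  | true => ‹_›
  | false => ‹_›

-- Normal forms of reduced words are only developed for `CoprodI`, not for the binary `M ∗ N`.
variable (M N) in
def mulEquivCoprodI : M ∗ N ≃* CoprodI (fun b => cond b N M) :=
  MonoidHom.toMulEquiv
    (lift (CoprodI.of (M := fun b => cond b N M) (i := false))
      (CoprodI.of (M := fun b => cond b N M) (i := true)))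
    (CoprodI.lift fun | false => inl | true => inr)
    (hom_ext rfl rfl) (CoprodI.ext_hom _ _ fun b => by cases b <;> rfl)

theorem isTorsionFree_ker {H : Type*} [Group H] {φ : M ∗ N →* H}
    (hM : Function.Injective (φ.comp inl)) (hN : Function.Injective (φ.comp inr)) :
    IsTorsionFree φ.ker := by
  let e := mulEquivCoprodI M N
  refine MonoidHom.isTorsionFree_ker fun x hx hφx => e.injective ?_
  rw [map_one]
  refine CoprodI.eq_one_of_isOfFinOrder_of_map_eq_one (ψ := φ.comp e.symm.toMonoidHom)
    (fun | false => hM | true => hN) (e.toMonoidHom.isOfFinOrder hx) ?_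
  simpa using hφx

end Monoid.Coprod

namespace DihedralGroup

variable (n : ℕ)

def rotationHom : Multiplicative (ZMod n) →* DihedralGroup n where
  toFun i := r i.toAdd
  map_one' := rfl
  map_mul' _ _ := (r_mul_r _ _).symm

def reflectionHom : Multiplicative (ZMod 2) →* DihedralGroup n where
  toFun i := sr 0 ^ i.toAdd.val
  map_one' := pow_zero _
  map_mul' i j := by
    rw [toAdd_mul, ZMod.val_add, ← pow_add]
    simpa [orderOf_sr] using pow_mod_orderOf (sr (0 : ZMod n)) (i.toAdd.val + j.toAdd.val)

variable {n}

theorem reflectionHom_ofAdd_one : reflectionHom n (.ofAdd 1) = sr 0 :=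
  pow_one _

theorem rotationHom_injective : Function.Injective (rotationHom n) :=
  fun _ _ h => r.inj h

theorem reflectionHom_injective : Function.Injective (reflectionHom n) := by
  refine (injective_iff_map_eq_one _).2 fun i hi => ?_
  fin_cases i
  · rfl
  · exact absurd (reflectionHom_ofAdd_one.symm.trans hi) (by rw [one_def]; exact nofun)

end DihedralGroup

open DihedralGroup

theorem stmt_11_general (n : ℕ) :
    ∃ φ : Coprod (Multiplicative (ZMod 2)) (Multiplicative (ZMod n)) →* DihedralGroup n,
      Function.Surjective φ ∧ Monoid.IsTorsionFree φ.ker := by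
  refine ⟨Coprod.lift (reflectionHom n) (rotationHom n), ?_,
    Coprod.isTorsionFree_ker reflectionHom_injective rotationHom_injective⟩
  rintro (i | i)
  · exact ⟨.inr (.ofAdd i), rfl⟩
  · refine ⟨.inl (.ofAdd 1) * .inr (.ofAdd i), ?_⟩
    rw [map_mul, Coprod.lift_apply_inl, Coprod.lift_apply_inr, reflectionHom_ofAdd_one]
    exact (sr_mul_r 0 i).trans (by rw [zero_add])

theorem stmt_11 (n : ℕ) (hn : 3 ≤ n) :
    ∃ φ : Coprod (Multiplicative (ZMod 2)) (Multiplicative (ZMod n)) →* DihedralGroup n,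
      Function.Surjective φ ∧ Monoid.IsTorsionFree φ.ker :=
  stmt_11_general n
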